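/- arXiv:2412.21192 — 2 statements merged into one kernel-verified Lean document; each statement's English description precedes it below -/
import Mathlib

section
/- Let W be a standard Brownian motion, H ∈ (0,1), ζ = H - 1/2, T > 0, and Δ = T/n with partition points t_k = kΔ. Define the left-point Riemann sum error III = Σ_{i=0}^{k-2} (t_k - t_i)^ζ W_{t_i, t_{i+1}} - ∫_0^{t_{k-1}} (t_k - s)^ζ dW_s, where W_{t_i,t_{i+1}} = W_{t_{i+1}} - W_{t_i}. Then there is a constant C, independent of n and k, with E[III²] ≤ C Δ^{2H}. -/
set_option maxHeartbeats 1000000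

open MeasureTheory intervalIntegral Finset

lemma aux_rpow_diff (ζ : ℝ) (hζ : ζ ≤ 1) {a b : ℝ} (hb : 0 < b) (hab : b ≤ a) :
    |a ^ ζ - b ^ ζ| ≤ |ζ| * b ^ (ζ - 1) * (a - b) := by
  rcases eq_or_lt_of_le hab with rfl | h
  · simp
  · have hcont : ContinuousOn (fun x : ℝ => x ^ ζ) (Set.Icc b a) := fun x hx =>
      (Real.continuousAt_rpow_const x ζ (Or.inl (ne_of_gt (lt_of_lt_of_le hb hx.1)))).continuousWithinAt
    have hdiff : DifferentiableOn ℝ (fun x : ℝ => x ^ ζ) (Set.Ioo b a) := fun x hx =>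
      (Real.hasDerivAt_rpow_const (p := ζ) (Or.inl (ne_of_gt (lt_trans hb hx.1)))).differentiableAt.differentiableWithinAt
    obtain ⟨c, hc, hc'⟩ := exists_deriv_eq_slope (fun x : ℝ => x ^ ζ) h hcont hdiff
    have hc0 : 0 < c := lt_trans hb hc.1
    rw [Real.deriv_rpow_const c ζ, eq_div_iff (sub_ne_zero.2 h.ne')] at hc'
    rw [← hc', abs_mul, abs_mul, abs_of_nonneg (sub_nonneg.2 hab),
      abs_of_nonneg (Real.rpow_nonneg hc0.le _)]
    have h' : c ^ (ζ - 1) ≤ b ^ (ζ - 1) :=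
      Real.rpow_le_rpow_of_nonpos hb hc.1.le (by linarith)
    exact mul_le_mul_of_nonneg_right (mul_le_mul_of_nonneg_left h' (abs_nonneg ζ))
      (sub_nonneg.2 hab)

/-- Left-point Riemann sum error for the singular kernel: with `ζ = H − 1/2`, `Δ = T/n`,
`t_i = iΔ`, and `III = ∑_{i=0}^{k-2} (t_k − t_i)^ζ W_{t_i,t_{i+1}} − ∫_0^{t_{k-1}} (t_k−s)^ζ dW_s`,
Itô's isometry gives `E[III²] = ∑_{i=0}^{k-2} ∫_{t_i}^{t_{i+1}} ((t_k−t_i)^ζ − (t_k−s)^ζ)² ds`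
(encoded as a hypothesis), and there is a constant `C` independent of `n` and `k` with
`E[III²] ≤ C Δ^{2H}`. -/
theorem stmt11 (H T : ℝ) (hH : H ∈ Set.Ioo (0 : ℝ) 1) (hT : 0 < T) :
    ∃ C : ℝ, ∀ (n k : ℕ), 2 ≤ k → k ≤ n →
      ∀ (Ω : Type) (_ : MeasurableSpace Ω) (μ : Measure Ω), IsProbabilityMeasure μ →
      ∀ (W : ℝ → Ω → ℝ) (III : Ω → ℝ),
        (∫ ω, (III ω) ^ 2 ∂μ
            = ∑ i ∈ Finset.range (k - 1),
                ∫ s in ((i : ℝ) * (T / n))..(((i : ℝ) + 1) * (T / n)),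
                  (((k : ℝ) * (T / n) - (i : ℝ) * (T / n)) ^ (H - 1 / 2)
                    - ((k : ℝ) * (T / n) - s) ^ (H - 1 / 2)) ^ 2) →
        ∫ ω, (III ω) ^ 2 ∂μ ≤ C * (T / n) ^ (2 * H) := by
  obtain ⟨hH0, hH1⟩ := hH
  have hp : 2 * H - 3 < -1 := by linarith
  have hsum : Summable (fun j : ℕ => ((j : ℝ) + 1) ^ (2 * H - 3)) := by
    have h1 : Summable (fun n : ℕ => (n : ℝ) ^ (2 * H - 3)) :=
      Real.summable_nat_rpow.mpr hp
    have := h1.comp_injective Nat.succ_injective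
    refine this.congr fun j => ?_
    simp [Function.comp, Nat.succ_eq_add_one]
  set S : ℝ := ∑' j : ℕ, ((j : ℝ) + 1) ^ (2 * H - 3) with hS
  have hS0 : 0 ≤ S := tsum_nonneg fun j => Real.rpow_nonneg (by positivity) _
  refine ⟨(H - 1/2)^2 * S, ?_⟩
  intro n k hk2 hkn Ω _ μ _ W III hIso
  rw [hIso]
  have hn : 0 < (n : ℝ) := by
    have : 0 < n := lt_of_lt_of_le (by norm_num) (le_trans hk2 hkn)
    exact_mod_cast this
  set Δ : ℝ := T / n with hΔ
  have hΔ0 : 0 < Δ := div_pos hT hn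
  -- per-term bound
  have key : ∀ i ∈ Finset.range (k - 1),
      (∫ s in ((i : ℝ) * Δ)..(((i : ℝ) + 1) * Δ),
        (((k : ℝ) * Δ - (i : ℝ) * Δ) ^ (H - 1/2) - ((k : ℝ) * Δ - s) ^ (H - 1/2)) ^ 2)
      ≤ (H - 1/2)^2 * ((k - 1 - i : ℕ) : ℝ) ^ (2 * H - 3) * Δ ^ (2 * H) := by
    intro i hi
    rw [Finset.mem_range] at hi
    have him : i + 1 ≤ k - 1 := hi
    have hm1 : 1 ≤ k - 1 - i := Nat.le_sub_of_add_le (by omega)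
    set m : ℕ := k - 1 - i with hmdef
    have hmcast : (m : ℝ) = (k : ℝ) - 1 - (i : ℝ) := by
      have : (m : ℕ) = k - 1 - i := rfl
      push_cast [hmdef, Nat.cast_sub (by omega : i ≤ k - 1), Nat.cast_sub (by omega : 1 ≤ k)]
      ring
    have hm0 : (0 : ℝ) < m := by exact_mod_cast hm1
    set M : ℝ := (H - 1/2)^2 * ((m : ℝ) * Δ) ^ (2 * H - 3) * Δ ^ 2 with hM
    have hbound : ∀ s ∈ Set.uIoc ((i : ℝ) * Δ) (((i : ℝ) + 1) * Δ),
        ‖(((k : ℝ) * Δ - (i : ℝ) * Δ) ^ (H - 1/2) - ((k : ℝ) * Δ - s) ^ (H - 1/2)) ^ 2‖ ≤ M := by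
      intro s hs
      rw [Set.uIoc_of_le (by nlinarith : (i : ℝ) * Δ ≤ ((i : ℝ) + 1) * Δ)] at hs
      obtain ⟨hs1, hs2⟩ := hs
      set a : ℝ := (k : ℝ) * Δ - (i : ℝ) * Δ
      set b : ℝ := (k : ℝ) * Δ - s
      have hmb : (m : ℝ) * Δ ≤ b := by
        have : s ≤ ((i : ℝ) + 1) * Δ := hs2
        simp only [b, hmcast]; nlinarith
      have hb0 : 0 < b := lt_of_lt_of_le (by positivity) hmb
      have hba : b ≤ a := by simp only [a, b]; nlinarith [hs1.le]
      have habs := aux_rpow_diff (H - 1/2) (by linarith) hb0 hba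
      have hab : a - b ≤ Δ := by simp only [a, b]; nlinarith
      have h2 : |a ^ (H - 1/2) - b ^ (H - 1/2)| ≤ |H - 1/2| * ((m : ℝ) * Δ) ^ (H - 1/2 - 1) * Δ := by
        refine habs.trans ?_
        have hbm : b ^ (H - 1/2 - 1) ≤ ((m : ℝ) * Δ) ^ (H - 1/2 - 1) :=
          Real.rpow_le_rpow_of_nonpos (by positivity) hmb (by linarith)
        have h0 : 0 ≤ |H - 1/2| := abs_nonneg _
        exact mul_le_mul (mul_le_mul_of_nonneg_left hbm h0) hab (sub_nonneg.2 hba)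
          (by positivity)
      rw [Real.norm_eq_abs, abs_of_nonneg (by positivity), hM]
      calc (a ^ (H - 1/2) - b ^ (H - 1/2)) ^ 2
          = |a ^ (H - 1/2) - b ^ (H - 1/2)| ^ 2 := (sq_abs _).symm
        _ ≤ (|H - 1/2| * ((m : ℝ) * Δ) ^ (H - 1/2 - 1) * Δ) ^ 2 := by
            apply pow_le_pow_left₀ (abs_nonneg _) h2
        _ = (H - 1/2)^2 * (((m : ℝ) * Δ) ^ (H - 1/2 - 1)) ^ 2 * Δ ^ 2 := by
            rw [mul_pow, mul_pow, sq_abs]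
        _ = (H - 1/2)^2 * ((m : ℝ) * Δ) ^ (2 * H - 3) * Δ ^ 2 := by
            rw [← Real.rpow_natCast (((m : ℝ) * Δ) ^ (H - 1/2 - 1)) 2,
              ← Real.rpow_mul (by positivity),
              show (H - 1/2 - 1) * ((2 : ℕ) : ℝ) = 2 * H - 3 by push_cast; ring]
    have := intervalIntegral.norm_integral_le_of_norm_le_const hbound
    have habs : |(((i : ℝ) + 1) * Δ) - ((i : ℝ) * Δ)| = Δ := by
      rw [abs_of_nonneg (by nlinarith)]; ring
    rw [habs] at this
    refine (le_trans (le_abs_self _) ((Real.norm_eq_abs _ ▸ this))).trans ?_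
    -- M * Δ = (H-1/2)^2 * m^(2H-3) * Δ^(2H)
    have : M * Δ = (H - 1/2)^2 * ((m : ℝ)) ^ (2 * H - 3) * Δ ^ (2 * H) := by
      rw [hM, Real.mul_rpow (le_of_lt hm0) hΔ0.le]
      have hΔpow : Δ ^ (2 * H - 3) * Δ ^ 2 * Δ = Δ ^ (2 * H) := by
        have e : Δ ^ (2 * H - 3) * Δ ^ 2 * Δ
            = Δ ^ (2 * H - 3) * Δ ^ ((2 : ℕ) : ℝ) * Δ ^ (1 : ℝ) := by
          rw [Real.rpow_natCast, Real.rpow_one]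
        rw [e, ← Real.rpow_add hΔ0, ← Real.rpow_add hΔ0]
        congr 1; push_cast; ring
      calc (H - 1/2)^2 * ((m : ℝ) ^ (2 * H - 3) * Δ ^ (2 * H - 3)) * Δ ^ 2 * Δ
          = (H - 1/2)^2 * (m : ℝ) ^ (2 * H - 3) * (Δ ^ (2 * H - 3) * Δ ^ 2 * Δ) := by ring
        _ = _ := by rw [hΔpow]
    rw [this]
  calc ∑ i ∈ Finset.range (k - 1),
        (∫ s in ((i : ℝ) * Δ)..(((i : ℝ) + 1) * Δ),
          (((k : ℝ) * Δ - (i : ℝ) * Δ) ^ (H - 1/2) - ((k : ℝ) * Δ - s) ^ (H - 1/2)) ^ 2)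
      ≤ ∑ i ∈ Finset.range (k - 1),
          (H - 1/2)^2 * ((k - 1 - i : ℕ) : ℝ) ^ (2 * H - 3) * Δ ^ (2 * H) :=
        Finset.sum_le_sum key
    _ = (H - 1/2)^2 * (∑ i ∈ Finset.range (k - 1), ((k - 1 - i : ℕ) : ℝ) ^ (2 * H - 3)) * Δ ^ (2 * H) := by
        rw [← Finset.sum_mul, ← Finset.mul_sum]
    _ ≤ (H - 1/2)^2 * S * Δ ^ (2 * H) := by
        have hrefl : ∑ i ∈ Finset.range (k - 1), ((k - 1 - i : ℕ) : ℝ) ^ (2 * H - 3)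
            = ∑ j ∈ Finset.range (k - 1), (((j + 1 : ℕ) : ℝ)) ^ (2 * H - 3) := by
          rw [← Finset.sum_range_reflect (fun j => (((j + 1 : ℕ) : ℝ)) ^ (2 * H - 3)) (k - 1)]
          refine Finset.sum_congr rfl fun i hi => ?_
          rw [Finset.mem_range] at hi
          congr 2
          omega
        have hle : ∑ j ∈ Finset.range (k - 1), (((j + 1 : ℕ) : ℝ)) ^ (2 * H - 3) ≤ S := by
          have := Summable.sum_le_tsum (Finset.range (k - 1))
            (fun j _ => Real.rpow_nonneg (by positivity) (2 * H - 3)) hsum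
          refine le_trans (le_of_eq ?_) this
          refine Finset.sum_congr rfl fun j _ => by push_cast; ring_nf
        rw [hrefl]
        have h1 : 0 ≤ (H - 1/2)^2 := sq_nonneg _
        have h2 : 0 ≤ Δ ^ (2 * H) := Real.rpow_nonneg hΔ0.le _
        nlinarith [mul_le_mul_of_nonneg_left hle h1]
end

section
/- Let X be a one-dimensional path lifted canonically to a geometric rough path by X^{0^n}_{st} = (X_t - X_s)^n / n!. Assume the joint lift 𝐗̄ over (X, W) satisfies the shuffle (integration-by-parts) relations and extends the Itô integrals 𝐗̄^{w α}_{st} = ∫_s^t 𝐗^w_{su} dW^α_u. Then for every m, n ≥ 0, the mixed term satisfies 𝐗̄^{0^m α 0^n}_{st} = Σ_{k=0}^n (X_t^{n-k} / (m! k! (n-k)!)) ∫_s^t (X_u - X_s)^m (-X_u)^k dW^α_u, where the Itô integrals on the right are well defined by adaptedness of X. -/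
open Finset

private noncomputable def Bf {Ω : Type*} (X : ℝ → Ω → ℝ)
    (Int : (ℝ → Ω → ℝ) → ℝ → ℝ → Ω → ℝ) (s t : ℝ) (ω : Ω) (m n : ℕ) : ℝ :=
  ∑ k ∈ Finset.range (n + 1),
    (X t ω) ^ (n - k)
      / ((Nat.factorial m : ℝ) * (Nat.factorial k : ℝ) * (Nat.factorial (n - k) : ℝ))
      * Int (fun u ω => (X u ω - X s ω) ^ m * (-(X u ω)) ^ k) s t ω

private theorem key {Ω : Type*} (X : ℝ → Ω → ℝ)
    (Int : (ℝ → Ω → ℝ) → ℝ → ℝ → Ω → ℝ)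
    (hAdd : ∀ (f g : ℝ → Ω → ℝ) (s t : ℝ) (ω : Ω),
      Int (fun u ω => f u ω + g u ω) s t ω = Int f s t ω + Int g s t ω)
    (hSmul : ∀ (c : Ω → ℝ) (f : ℝ → Ω → ℝ) (s t : ℝ) (ω : Ω),
      Int (fun u ω => c ω * f u ω) s t ω = c ω * Int f s t ω)
    (A : ℕ → ℕ → ℝ → ℝ → Ω → ℝ)
    (hBase : ∀ (m : ℕ) (s t : ℝ) (ω : Ω),
      A m 0 s t ω = Int (fun u ω => (X u ω - X s ω) ^ m / (Nat.factorial m : ℝ)) s t ω)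
    (hRec : ∀ (m n : ℕ) (s t : ℝ) (ω : Ω),
      A m 0 s t ω * (X t ω - X s ω) ^ n / (Nat.factorial n : ℝ)
        = ∑ k ∈ Finset.range (n + 1), ((m + k).choose k : ℝ) * A (m + k) (n - k) s t ω)
    (s t : ℝ) (ω : Ω) :
    ∀ n m : ℕ, A m n s t ω = Bf X Int s t ω m n := by
  have hfac : ∀ k : ℕ, ((Nat.factorial k : ℝ)) ≠ 0 :=
    fun k => Nat.cast_ne_zero.mpr k.factorial_ne_zero
  have hzero : Int (fun _ _ => (0:ℝ)) s t ω = 0 := by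
    have h := hSmul (fun _ => (0:ℝ)) (fun _ _ => (0:ℝ)) s t ω
    simpa using h
  have hsum : ∀ (F : Finset ℕ) (f : ℕ → ℝ → Ω → ℝ),
      Int (fun u ω => ∑ i ∈ F, f i u ω) s t ω = ∑ i ∈ F, Int (f i) s t ω := by
    intro F f
    induction F using Finset.induction_on with
    | empty => simpa using hzero
    | @insert a F' ha ih =>
      have h2 : (fun (u:ℝ) (ω':Ω) => ∑ i ∈ insert a F', f i u ω')
          = fun u ω' => f a u ω' + ∑ i ∈ F', f i u ω' := by
        funext u ω'; rw [Finset.sum_insert ha]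
      rw [h2, hAdd, ih, Finset.sum_insert ha]
  intro n
  induction n using Nat.strong_induction_on with
  | _ n IH =>
    intro m
    -- Step 2: express `A m 0 * X^n / n!` as a double sum of integrals
    have e1 := hSmul (fun ω' => (X t ω' - X s ω') ^ n / (Nat.factorial n : ℝ))
        (fun u ω' => (X u ω' - X s ω') ^ m / (Nat.factorial m : ℝ)) s t ω
    have e2 : (fun (u:ℝ) (ω':Ω) => (X t ω' - X s ω') ^ n / (Nat.factorial n : ℝ)
          * ((X u ω' - X s ω') ^ m / (Nat.factorial m : ℝ)))
        = fun u ω' => ∑ j ∈ Finset.range (n+1), ∑ i ∈ Finset.range (n - j + 1),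
            ((n.choose j : ℝ) * ((n-j).choose i : ℝ)
                / ((Nat.factorial m : ℝ) * (Nat.factorial n : ℝ)) * X t ω' ^ (n - j - i))
              * ((X u ω' - X s ω') ^ (m + j) * (-(X u ω')) ^ i) := by
      funext u ω'
      have hx : X t ω' - X s ω' = (X u ω' - X s ω') + (-(X u ω') + X t ω') := by ring
      rw [hx, add_pow]
      simp only [add_pow]
      simp only [Finset.sum_mul, Finset.sum_div, Finset.mul_sum]
      refine Finset.sum_congr rfl fun j hj => Finset.sum_congr rfl fun i hi => ?_
      ring
    have step2 : A m 0 s t ω * (X t ω - X s ω) ^ n / (Nat.factorial n : ℝ)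
        = ∑ j ∈ Finset.range (n+1), ∑ i ∈ Finset.range (n - j + 1),
            ((n.choose j : ℝ) * ((n-j).choose i : ℝ)
                / ((Nat.factorial m : ℝ) * (Nat.factorial n : ℝ)) * X t ω ^ (n - j - i))
              * Int (fun u ω' => (X u ω' - X s ω') ^ (m + j) * (-(X u ω')) ^ i) s t ω := by
      calc A m 0 s t ω * (X t ω - X s ω) ^ n / (Nat.factorial n : ℝ)
          = (X t ω - X s ω) ^ n / (Nat.factorial n : ℝ)
              * Int (fun u ω' => (X u ω' - X s ω') ^ m / (Nat.factorial m : ℝ)) s t ω := by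
            rw [hBase]; ring
        _ = Int (fun u ω' => (X t ω' - X s ω') ^ n / (Nat.factorial n : ℝ)
              * ((X u ω' - X s ω') ^ m / (Nat.factorial m : ℝ))) s t ω := e1.symm
        _ = Int (fun u ω' => ∑ j ∈ Finset.range (n+1), ∑ i ∈ Finset.range (n - j + 1),
              ((n.choose j : ℝ) * ((n-j).choose i : ℝ)
                  / ((Nat.factorial m : ℝ) * (Nat.factorial n : ℝ)) * X t ω' ^ (n - j - i))
                * ((X u ω' - X s ω') ^ (m + j) * (-(X u ω')) ^ i)) s t ω := by rw [e2]
        _ = ∑ j ∈ Finset.range (n+1), Int (fun u ω' => ∑ i ∈ Finset.range (n - j + 1),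
              ((n.choose j : ℝ) * ((n-j).choose i : ℝ)
                  / ((Nat.factorial m : ℝ) * (Nat.factorial n : ℝ)) * X t ω' ^ (n - j - i))
                * ((X u ω' - X s ω') ^ (m + j) * (-(X u ω')) ^ i)) s t ω :=
            hsum (Finset.range (n+1)) _
        _ = ∑ j ∈ Finset.range (n+1), ∑ i ∈ Finset.range (n - j + 1),
              ((n.choose j : ℝ) * ((n-j).choose i : ℝ)
                  / ((Nat.factorial m : ℝ) * (Nat.factorial n : ℝ)) * X t ω ^ (n - j - i))
                * Int (fun u ω' => (X u ω' - X s ω') ^ (m + j) * (-(X u ω')) ^ i) s t ω := by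
            refine Finset.sum_congr rfl fun j hj => ?_
            rw [hsum (Finset.range (n - j + 1)) (fun i u ω' =>
              ((n.choose j : ℝ) * ((n-j).choose i : ℝ)
                  / ((Nat.factorial m : ℝ) * (Nat.factorial n : ℝ)) * X t ω' ^ (n - j - i))
                * ((X u ω' - X s ω') ^ (m + j) * (-(X u ω')) ^ i))]
            exact Finset.sum_congr rfl fun i hi =>
              hSmul (fun ω' => (n.choose j : ℝ) * ((n-j).choose i : ℝ)
                  / ((Nat.factorial m : ℝ) * (Nat.factorial n : ℝ)) * X t ω' ^ (n - j - i))
                (fun u ω' => (X u ω' - X s ω') ^ (m + j) * (-(X u ω')) ^ i) s t ω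
    -- Step 1: identify the double sum with the `Bf`-combination
    have step1 : (∑ j ∈ Finset.range (n+1), ∑ i ∈ Finset.range (n - j + 1),
            ((n.choose j : ℝ) * ((n-j).choose i : ℝ)
                / ((Nat.factorial m : ℝ) * (Nat.factorial n : ℝ)) * X t ω ^ (n - j - i))
              * Int (fun u ω' => (X u ω' - X s ω') ^ (m + j) * (-(X u ω')) ^ i) s t ω)
        = ∑ k ∈ Finset.range (n+1), ((m + k).choose k : ℝ) * Bf X Int s t ω (m + k) (n - k) := by
      refine Finset.sum_congr rfl fun j hj => ?_
      simp only [Bf, Finset.mul_sum]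
      refine Finset.sum_congr rfl fun i hi => ?_
      have hj' : j ≤ n := by have := Finset.mem_range.mp hj; omega
      have hi' : i ≤ n - j := by have := Finset.mem_range.mp hi; omega
      rw [Nat.cast_choose ℝ hj', Nat.cast_choose ℝ hi',
        Nat.cast_choose ℝ (Nat.le_add_left j m), Nat.add_sub_cancel]
      have f1 := hfac m; have f2 := hfac n; have f3 := hfac j; have f4 := hfac i
      have f5 := hfac (n - j); have f6 := hfac (n - j - i); have f7 := hfac (m + j)
      field_simp
    -- assemble
    have hrec' := hRec m n s t ω
    rw [Finset.sum_range_succ'] at hrec'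
    simp only [Nat.add_zero, Nat.choose_zero_right, Nat.cast_one, one_mul, Nat.sub_zero] at hrec'
    have hmain := step2.trans step1
    rw [Finset.sum_range_succ'] at hmain
    simp only [Nat.add_zero, Nat.choose_zero_right, Nat.cast_one, one_mul, Nat.sub_zero] at hmain
    have hsum2 : (∑ k ∈ Finset.range n,
          ((m + (k + 1)).choose (k + 1) : ℝ) * A (m + (k + 1)) (n - (k + 1)) s t ω)
        = ∑ k ∈ Finset.range n,
          ((m + (k + 1)).choose (k + 1) : ℝ) * Bf X Int s t ω (m + (k + 1)) (n - (k + 1)) :=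
      Finset.sum_congr rfl fun k hk => by
        rw [IH (n - (k + 1)) (by have := Finset.mem_range.mp hk; omega) (m + (k + 1))]
    rw [hsum2] at hrec'
    show A m n s t ω = Bf X Int s t ω m n
    linarith [hrec', hmain]

/-- Binomial representation of the mixed rough-path terms (Proposition `binomial`).
Let `X` be a one-dimensional adapted process, `Int f s t` an abstract (Itô-type) integral
`∫_s^t f(u) dW^α_u` which is pathwise additive and linear over random constants, and let
`A m n s t = 𝐗̄^{0^m α 0^n}_{st}` be the joint lift, characterised by:
* base case `A m 0 s t = ∫_s^t X_{su}^m/m! dW^α_u`;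
* the shuffle recursion `A m 0 · X_{st}^n/n! = ∑_{k=0}^n C(m+k,k) A (m+k) (n-k)`.
Then for all `m, n`:
`A m n s t = ∑_{k=0}^n X_t^{n-k}/(m! k! (n-k)!) ∫_s^t X_{su}^m (−X_u)^k dW^α_u`. -/
theorem stmt13 {Ω : Type*} (X : ℝ → Ω → ℝ)
    (Int : (ℝ → Ω → ℝ) → ℝ → ℝ → Ω → ℝ)
    (hAdd : ∀ (f g : ℝ → Ω → ℝ) (s t : ℝ) (ω : Ω),
      Int (fun u ω => f u ω + g u ω) s t ω = Int f s t ω + Int g s t ω)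
    (hSmul : ∀ (c : Ω → ℝ) (f : ℝ → Ω → ℝ) (s t : ℝ) (ω : Ω),
      Int (fun u ω => c ω * f u ω) s t ω = c ω * Int f s t ω)
    (A : ℕ → ℕ → ℝ → ℝ → Ω → ℝ)
    (hBase : ∀ (m : ℕ) (s t : ℝ) (ω : Ω),
      A m 0 s t ω = Int (fun u ω => (X u ω - X s ω) ^ m / (Nat.factorial m : ℝ)) s t ω)
    (hRec : ∀ (m n : ℕ) (s t : ℝ) (ω : Ω),
      A m 0 s t ω * (X t ω - X s ω) ^ n / (Nat.factorial n : ℝ)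
        = ∑ k ∈ Finset.range (n + 1), ((m + k).choose k : ℝ) * A (m + k) (n - k) s t ω) :
    ∀ (m n : ℕ) (s t : ℝ) (ω : Ω),
      A m n s t ω
        = ∑ k ∈ Finset.range (n + 1),
            (X t ω) ^ (n - k)
              / ((Nat.factorial m : ℝ) * (Nat.factorial k : ℝ) * (Nat.factorial (n - k) : ℝ))
              * Int (fun u ω => (X u ω - X s ω) ^ m * (-(X u ω)) ^ k) s t ω := by
  intro m n s t ω
  exact key X Int hAdd hSmul A hBase hRec s t ω n m
end
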